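/- Let C be an idempotent complete (Karoubian) triangulated category equipped with a weight structure w, and let M be an object of C such that for every integer n ≥ 1 there exists a distinguished triangle X_n → M → Y_n → X_n[1] with X_n ∈ C_{w≤0} and Y_n ∈ C_{w≥n+1}. Then there exists a distinguished triangle X → M → Y → X[1] with X ∈ C_{w≤0} and Y ∈ C_{w≥i} for every i ∈ ℤ (i.e. Y is left weight-degenerate). -/

import Mathlib

open CategoryTheory CategoryTheory.Limits CategoryTheory.Pretriangulated ZeroObject

universe v u

variable (C : Type u) [Category.{v} C] [HasZeroObject C] [Preadditive C] [HasShift C ℤ]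
  [∀ n : ℤ, (shiftFunctor C n).Additive] [Pretriangulated C]

/-- A weight structure on a triangulated category `C`: a pair of retract-closed classes
`le = C_{w≤0}` and `ge = C_{w≥0}` satisfying semi-invariance with respect to translations,
orthogonality, and the existence of weight decompositions. -/
structure WeightStructure where
  /-- the class `C_{w≤0}` -/
  le : Set C
  /-- the class `C_{w≥0}` -/
  ge : Set C
  /-- `C_{w≤0}` is closed under retracts -/
  le_retract : ∀ ⦃X Y : C⦄ (i : X ⟶ Y) (r : Y ⟶ X), i ≫ r = 𝟙 X → le Y → le X
  /-- `C_{w≥0}` is closed under retracts -/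
  ge_retract : ∀ ⦃X Y : C⦄ (i : X ⟶ Y) (r : Y ⟶ X), i ≫ r = 𝟙 X → ge Y → ge X
  /-- `C_{w≤0} ⊆ C_{w≤0}[1]`, i.e. `X ∈ C_{w≤0} → X[-1] ∈ C_{w≤0}` -/
  le_shift : ∀ ⦃X : C⦄, le X → le ((shiftFunctor C (-1 : ℤ)).obj X)
  /-- `C_{w≥0}[1] ⊆ C_{w≥0}`, i.e. `X ∈ C_{w≥0} → X[1] ∈ C_{w≥0}` -/
  ge_shift : ∀ ⦃X : C⦄, ge X → ge ((shiftFunctor C (1 : ℤ)).obj X)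
  /-- orthogonality: `Hom(X, Y[1]) = 0` for `X ∈ C_{w≤0}`, `Y ∈ C_{w≥0}` -/
  orth : ∀ ⦃X Y : C⦄, le X → ge Y → ∀ f : X ⟶ (shiftFunctor C (1 : ℤ)).obj Y, f = 0
  /-- existence of weight decompositions -/
  decomp : ∀ M : C, ∃ (X Y : C) (f : X ⟶ M) (g : M ⟶ Y)
      (h : Y ⟶ (shiftFunctor C (1 : ℤ)).obj X),
      Triangle.mk f g h ∈ (distTriang C) ∧ le X ∧ ge ((shiftFunctor C (-1 : ℤ)).obj Y)

variable {C}

namespace WeightStructure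

/-- `X ∈ C_{w≤i} = C_{w≤0}[i]`, i.e. `X[-i] ∈ C_{w≤0}`. -/
def leDeg (w : WeightStructure C) (i : ℤ) (X : C) : Prop :=
  w.le ((shiftFunctor C (-i)).obj X)

/-- `X ∈ C_{w≥i} = C_{w≥0}[i]`, i.e. `X[-i] ∈ C_{w≥0}`. -/
def geDeg (w : WeightStructure C) (i : ℤ) (X : C) : Prop :=
  w.ge ((shiftFunctor C (-i)).obj X)

/-- The triangle `A → M → B → A[1]` is an `m`-weight decomposition of `M`:
it is distinguished, `A ∈ C_{w≤m}` and `B ∈ C_{w≥m+1}`. -/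
def IsWeightDecomp (w : WeightStructure C) (m : ℤ) {A M B : C}
    (f : A ⟶ M) (g : M ⟶ B) (h : B ⟶ (shiftFunctor C (1 : ℤ)).obj A) : Prop :=
  Triangle.mk f g h ∈ (distTriang C) ∧ w.leDeg m A ∧ w.geDeg (m + 1) B

/-- `g : M ⟶ N` kills weights `m,…,n`: there exist an `n`-weight decomposition of `M` and an
`(m-1)`-weight decomposition of `N` such that the composite `w_{≤n}M → M → N → w_{≥m}N` is `0`. -/
def KillsWeights (w : WeightStructure C) (m n : ℤ) {M N : C} (g : M ⟶ N) : Prop :=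
  ∃ (A B A' B' : C) (f : A ⟶ M) (p : M ⟶ B) (δ : B ⟶ (shiftFunctor C (1 : ℤ)).obj A)
    (f' : A' ⟶ N) (p' : N ⟶ B') (δ' : B' ⟶ (shiftFunctor C (1 : ℤ)).obj A'),
    w.IsWeightDecomp n f p δ ∧ w.IsWeightDecomp (m - 1) f' p' δ' ∧ f ≫ g ≫ p' = 0

/-- `M` is without weights `m,…,n` if `𝟙 M` kills weights `m,…,n`. -/
def WithoutWeights (w : WeightStructure C) (m n : ℤ) (M : C) : Prop :=
  w.KillsWeights m n (𝟙 M)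

end WeightStructure

/-!
Let `X → M → Y` and `X' → M → Y'` be distinguished with `X, X' ∈ C_{w≤0}`, `Y ∈ C_{w≥2}` and
`Y' ∈ C_{w≥1}`. By orthogonality `M → Y'` kills `X` and `M → Y` kills `X'`, so each factors
through the other, giving `c : Y → Y'` and `d : Y' → Y` over `M`. Then `c ≫ d - 𝟙 Y` kills
`M → Y`, hence factors through `Y → X[1]`; it vanishes because `X[1] ∈ C_{w≤1}` and
`Y ∈ C_{w≥2}`. So the `Y` of the decomposition for `n = 1` is a retract of every `Yₙ`,
and therefore lies in every `C_{w≥i}`.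
-/

namespace WeightStructure

variable (w : WeightStructure C)

lemma le_of_iso {X Y : C} (e : X ≅ Y) (h : w.le X) : w.le Y :=
  w.le_retract e.inv e.hom e.inv_hom_id h

lemma ge_of_iso {X Y : C} (e : X ≅ Y) (h : w.ge X) : w.ge Y :=
  w.ge_retract e.inv e.hom e.inv_hom_id h

lemma geDeg_of_retract {i : ℤ} {X Y : C} (e : Retract X Y) (h : w.geDeg i Y) :
    w.geDeg i X :=
  w.ge_retract _ _ (e.map (shiftFunctor C (-i))).retract h

lemma leDeg_zero {X : C} (h : w.le X) : w.leDeg 0 X :=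
  w.le_of_iso ((shiftFunctorZero' C (-0 : ℤ) (by simp)).app X).symm h

lemma leDeg_one_shift {X : C} (h : w.le X) : w.leDeg 1 ((shiftFunctor C (1 : ℤ)).obj X) :=
  w.le_of_iso ((shiftFunctorCompIsoId C (1 : ℤ) (-1) (by simp)).app X).symm h

lemma geDeg_of_geDeg_add_one {i : ℤ} {Y : C} (h : w.geDeg (i + 1) Y) : w.geDeg i Y :=
  w.ge_of_iso ((shiftFunctorAdd' C (-(i + 1)) 1 (-i) (by ring)).app Y).symm (w.ge_shift h)

lemma geDeg_of_le {i j : ℤ} (hij : i ≤ j) {Y : C} (h : w.geDeg j Y) : w.geDeg i Y := by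
  induction j, hij using Int.leInduction with
  | base => exact h
  | succ j _ ih => exact ih (w.geDeg_of_geDeg_add_one h)

lemma hom_eq_zero_of_leDeg_of_geDeg {i j : ℤ} (hij : i < j) {X Y : C} (hX : w.leDeg i X)
    (hY : w.geDeg j Y) (f : X ⟶ Y) : f = 0 := by
  have hY' : w.geDeg (i + 1) Y := w.geDeg_of_le hij hY
  let e : (shiftFunctor C (-i)).obj Y ≅ (shiftFunctor C (1 : ℤ)).obj
      ((shiftFunctor C (-(i + 1))).obj Y) :=
    (shiftFunctorAdd' C (-(i + 1)) 1 (-i) (by ring)).app Y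
  have h : (shiftFunctor C (-i)).map f ≫ e.hom = 0 := w.orth hX hY' _
  rwa [Preadditive.IsIso.comp_right_eq_zero, Functor.map_eq_zero_iff] at h

lemma nonempty_retract_of_distTriang {M X X' Y Y' : C} {f : X ⟶ M} {p : M ⟶ Y}
    {δ : Y ⟶ (shiftFunctor C (1 : ℤ)).obj X} {f' : X' ⟶ M} {p' : M ⟶ Y'}
    {δ' : Y' ⟶ (shiftFunctor C (1 : ℤ)).obj X'} (hT : Triangle.mk f p δ ∈ distTriang C)
    (hT' : Triangle.mk f' p' δ' ∈ distTriang C) (hX : w.le X) (hX' : w.le X')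
    (hY : w.geDeg 2 Y) (hY' : w.geDeg 1 Y') : Nonempty (Retract Y Y') := by
  obtain ⟨c, hc⟩ : ∃ c : Y ⟶ Y', p' = p ≫ c := Triangle.yoneda_exact₂ _ hT p'
    (w.hom_eq_zero_of_leDeg_of_geDeg zero_lt_one (w.leDeg_zero hX) hY' _)
  obtain ⟨d, hd⟩ : ∃ d : Y' ⟶ Y, p = p' ≫ d := Triangle.yoneda_exact₂ _ hT' p
    (w.hom_eq_zero_of_leDeg_of_geDeg zero_lt_two (w.leDeg_zero hX') hY _)
  obtain ⟨h, hh⟩ : ∃ h : (shiftFunctor C (1 : ℤ)).obj X ⟶ Y, c ≫ d - 𝟙 Y = δ ≫ h :=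
    Triangle.yoneda_exact₃ _ hT (c ≫ d - 𝟙 Y) (by
    change p ≫ (c ≫ d - 𝟙 Y) = 0
    rw [Preadditive.comp_sub, ← Category.assoc, ← hc, ← hd, Category.comp_id, sub_self])
  rw [w.hom_eq_zero_of_leDeg_of_geDeg one_lt_two (w.leDeg_one_shift hX) hY h, comp_zero,
    sub_eq_zero] at hh
  exact ⟨⟨c, d, hh⟩⟩

end WeightStructure

theorem exists_left_degenerate_decomposition_general
    (w : WeightStructure C) (M : C)
    (hM : ∀ n : ℤ, 1 ≤ n →
      ∃ (X Y : C) (f : X ⟶ M) (p : M ⟶ Y) (δ : Y ⟶ (shiftFunctor C (1 : ℤ)).obj X),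
        Triangle.mk f p δ ∈ (distTriang C) ∧ w.le X ∧ w.geDeg (n + 1) Y) :
    ∃ (X Y : C) (f : X ⟶ M) (p : M ⟶ Y) (δ : Y ⟶ (shiftFunctor C (1 : ℤ)).obj X),
      Triangle.mk f p δ ∈ (distTriang C) ∧ w.le X ∧ ∀ i : ℤ, w.geDeg i Y := by
  obtain ⟨X, Y, f, p, δ, hT, hX, hY⟩ := hM 1 le_rfl
  refine ⟨X, Y, f, p, δ, hT, hX, fun i => ?_⟩
  obtain ⟨X', Y', f', p', δ', hT', hX', hY'⟩ := hM (max 1 i) (le_max_left 1 i)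
  obtain ⟨e⟩ := w.nonempty_retract_of_distTriang hT hT' hX hX' hY (w.geDeg_of_le (by omega) hY')
  exact w.geDeg_of_retract e (w.geDeg_of_le (by omega) hY')

/-- (From the proof of Theorem 2.3.4(II).) In a Karoubian triangulated category, if for every
`n ≥ 1` there is a distinguished triangle `Xₙ → M → Yₙ → Xₙ[1]` with `Xₙ ∈ C_{w≤0}` and
`Yₙ ∈ C_{w≥n+1}`, then there is a distinguished triangle `X → M → Y → X[1]` with `X ∈ C_{w≤0}`
and `Y` left weight-degenerate (`Y ∈ C_{w≥i}` for all `i`). -/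
theorem exists_left_degenerate_decomposition [IsIdempotentComplete C]
    (w : WeightStructure C) (M : C)
    (hM : ∀ n : ℤ, 1 ≤ n →
      ∃ (X Y : C) (f : X ⟶ M) (p : M ⟶ Y) (δ : Y ⟶ (shiftFunctor C (1 : ℤ)).obj X),
        Triangle.mk f p δ ∈ (distTriang C) ∧ w.le X ∧ w.geDeg (n + 1) Y) :
    ∃ (X Y : C) (f : X ⟶ M) (p : M ⟶ Y) (δ : Y ⟶ (shiftFunctor C (1 : ℤ)).obj X),
      Triangle.mk f p δ ∈ (distTriang C) ∧ w.le X ∧ ∀ i : ℤ, w.geDeg i Y :=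
  exists_left_degenerate_decomposition_general w M hM
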